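/- Semantic correctness of Algorithm 5 (safety task under a safety environment specification): let T₁ be a set of nonempty finite words over A × B, let M₂ be a DFA over A × B with finite state type and accepting set F₂, let T₂ be the set of nonempty finite words accepted by M₂, and define EnvWinsFrom(q) to hold iff there exists an environment strategy σenv such that for every agent strategy σag and every k ≥ 1, M₂.evalFrom q (play(σag, σenv)_{<k}) ∈ F₂. Then the following are equivalent: (i) there exists an agent strategy enforcing Safe T₁ under the environment specification Safe T₂; (ii) there exists an agent strategy σag such that for every σenv, writing π = play(σag, σenv) and run₂(k) = M₂.eval(π_{<k}), for every m ≥ 1: π_{<m} ∈ T₁, or there exists k ≤ m with ¬EnvWinsFrom(run₂(k)) or (k ≥ 1 and run₂(k) ∉ F₂). -/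

import Mathlib

/-- The first `k` letters of an infinite trace. -/
def pre {α : Type} (π : ℕ → α) (k : ℕ) : List α := (List.range k).map π

/-- The finite history of pairs of moves after `k` rounds. -/
def playPrefix {A B : Type} (σag : List B → A) (σenv : List A → B) : ℕ → List (A × B)
  | 0 => []
  | k + 1 =>
      let h := playPrefix σag σenv k
      let a := σag (h.map Prod.snd)
      let b := σenv (h.map Prod.fst ++ [a])
      h ++ [(a, b)]

/-- The infinite play generated by an agent strategy `σag : List B → A`
(the agent moves first) and an environment strategy `σenv : List A → B`:
`a₀ = σag []`, `b₀ = σenv [a₀]`, `a_{i+1} = σag [b₀, …, b_i]`,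
`b_{i+1} = σenv [a₀, …, a_{i+1}]`, and `play σag σenv i = (a_i, b_i)`. -/
def play {A B : Type} (σag : List B → A) (σenv : List A → B) (i : ℕ) : A × B :=
  let h := playPrefix σag σenv i
  let a := σag (h.map Prod.snd)
  let b := σenv (h.map Prod.fst ++ [a])
  (a, b)

/-- Reachability property: some nonempty finite prefix is in `T`. -/
def Reach {A B : Type} (T : Set (List (A × B))) : Set (ℕ → A × B) :=
  {π | ∃ k, 1 ≤ k ∧ pre π k ∈ T}

/-- Safety property: every nonempty finite prefix is in `T`. -/
def Safe {A B : Type} (T : Set (List (A × B))) : Set (ℕ → A × B) :=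
  {π | ∀ k, 1 ≤ k → pre π k ∈ T}

/-- The agent strategy `σag` enforces the property `P`. -/
def AgentEnforces {A B : Type} (σag : List B → A) (P : Set (ℕ → A × B)) : Prop :=
  ∀ σenv : List A → B, play σag σenv ∈ P

/-- The environment strategy `σenv` enforces the property `P`. -/
def EnvEnforces {A B : Type} (σenv : List A → B) (P : Set (ℕ → A × B)) : Prop :=
  ∀ σag : List B → A, play σag σenv ∈ P

/-- The agent strategy `σag` enforces `Task` under the environment
specification `Env`. -/
def EnforcesUnder {A B : Type} (σag : List B → A) (Task Env : Set (ℕ → A × B)) : Prop :=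
  ∀ σenv : List A → B, EnvEnforces σenv Env → play σag σenv ∈ Task

/-- `EnvWinsSafeFrom M q` : the environment has a strategy ensuring that,
starting the run of `M` from state `q`, every state reached after `k ≥ 1`
letters of the play lies in `M.accept`. -/
def EnvWinsSafeFrom {A B Q : Type} (M : DFA (A × B) Q) (q : Q) : Prop :=
  ∃ σenv : List A → B, ∀ σag : List B → A, ∀ k, 1 ≤ k →
    M.evalFrom q (pre (play σag σenv) k) ∈ M.accept

/-!
For (ii) ⇒ (i), an environment strategy enforcing `Safe T₂` keeps every state of the run accepting,
and its residual after any prefix witnesses that the state reached is in the environment's winning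
region; so against it the disjunction in (ii) collapses to membership in `T₁`.

For (i) ⇒ (ii) the agent keeps its strategy. If against `σenv` the `m`-prefix leaves `T₁` while all
states up to time `m` are winning and accepting, the environment can stitch a strategy: follow
`σenv` while the agent repeats its first `m` moves of that play, and at the first deviation (or
after round `m`) switch to a winning strategy from the current state. The stitched strategy enforces
`Safe T₂` and produces the same `m`-prefix, contradicting (i).
-/

namespace List

variable {α : Type*} [DecidableEq α]

def commonPrefixLength : List α → List α → ℕ
  | a :: l, b :: u => if a = b then commonPrefixLength l u + 1 else 0
  | _, _ => 0

theorem commonPrefixLength_le_length_left : ∀ l u : List α, commonPrefixLength l u ≤ l.length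
  | a :: l, b :: u => by
    unfold commonPrefixLength; split_ifs
    · simpa using commonPrefixLength_le_length_left l u
    · omega
  | [], _ => by simp [commonPrefixLength]
  | _ :: _, [] => by simp [commonPrefixLength]

theorem take_commonPrefixLength : ∀ l u : List α,
    l.take (commonPrefixLength l u) = u.take (commonPrefixLength l u)
  | a :: l, b :: u => by
    unfold commonPrefixLength; split_ifs with h
    · simp [h, take_commonPrefixLength l u]
    · simp
  | [], _ => by simp [commonPrefixLength]
  | _ :: _, [] => by simp [commonPrefixLength]

theorem getElem_commonPrefixLength_ne : ∀ (l u : List α) (hl : commonPrefixLength l u < l.length)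
    (hu : commonPrefixLength l u < u.length), l[commonPrefixLength l u] ≠ u[commonPrefixLength l u]
  | a :: l, b :: u, hl, hu => by
    unfold commonPrefixLength at hl hu ⊢
    split_ifs with h
    · simp only [getElem_cons_succ]
      simp only [h, ↓reduceIte, length_cons, Nat.add_lt_add_iff_right] at hl hu
      exact getElem_commonPrefixLength_ne l u hl hu
    · simpa using h
  | [], _, hl, _ => by simp [commonPrefixLength] at hl
  | _ :: _, [], _, hu => by simp [commonPrefixLength] at hu

theorem commonPrefixLength_append_append (p l v : List α) :
    commonPrefixLength (p ++ l) (p ++ v) = p.length + commonPrefixLength l v := by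
  induction p with
  | nil => simp
  | cons a p ih => simp [commonPrefixLength, ih]; omega

theorem commonPrefixLength_cons_of_head?_ne {a : α} {v : List α} (l : List α)
    (h : v.head? ≠ some a) :
    commonPrefixLength (a :: l) v = 0 := by
  cases v with
  | nil => rfl
  | cons b v => simp_all [commonPrefixLength, eq_comm]

end List

section Prefix

variable {α : Type} (π : ℕ → α)

@[simp]
theorem length_pre (n : ℕ) : (pre π n).length = n := by
  simp [pre]

@[simp]
theorem getElem_pre {n i : ℕ} (h : i < (pre π n).length) : (pre π n)[i] = π i := by
  simp [pre]

@[simp]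
theorem pre_zero : pre π 0 = [] := rfl

theorem pre_succ (n : ℕ) : pre π (n + 1) = pre π n ++ [π n] := by
  simp [pre, List.range_succ]

theorem pre_succ' (n : ℕ) : pre π (n + 1) = π 0 :: pre (fun i => π (i + 1)) n := by
  simp [pre, List.range_succ_eq_map]

theorem take_pre {k n : ℕ} (h : k ≤ n) : (pre π n).take k = pre π k := by
  simp [pre, ← List.map_take, List.take_range, min_eq_left h]

end Prefix

section Play

variable {A B : Type}

theorem pre_play (σa : List B → A) (σe : List A → B) :
    ∀ n, pre (play σa σe) n = playPrefix σa σe n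
  | 0 => rfl
  | n + 1 => by rw [pre_succ, pre_play σa σe n]; rfl

theorem play_fst (σa : List B → A) (σe : List A → B) (n : ℕ) :
    (play σa σe n).1 = σa ((pre (play σa σe) n).map Prod.snd) := by
  rw [pre_play]; rfl

theorem play_snd (σa : List B → A) (σe : List A → B) (n : ℕ) :
    (play σa σe n).2 = σe ((pre (play σa σe) n).map Prod.fst ++ [(play σa σe n).1]) := by
  rw [pre_play]; rfl

theorem map_fst_pre_play_succ (σa : List B → A) (σe : List A → B) (n : ℕ) :
    (pre (play σa σe) (n + 1)).map Prod.fst =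
      σa [] :: ((pre (play σa σe) (n + 1)).map Prod.fst).tail := by
  rw [pre_succ', List.map_cons, play_fst, pre_zero, List.map_nil, List.tail_cons]

theorem pre_play_congr {σa σa' : List B → A} {σe σe' : List A → B} {n : ℕ}
    (hA : ∀ i < n, σa ((pre (play σa σe) i).map Prod.snd) =
      σa' ((pre (play σa σe) i).map Prod.snd))
    (hE : ∀ i < n, σe ((pre (play σa σe) (i + 1)).map Prod.fst) =
      σe' ((pre (play σa σe) (i + 1)).map Prod.fst)) :
    pre (play σa σe) n = pre (play σa' σe') n := by
  induction n with
  | zero => rfl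
  | succ n ih =>
    have ih := ih (fun i hi => hA i (by omega)) (fun i hi => hE i (by omega))
    have hfst : (play σa σe n).1 = (play σa' σe' n).1 := by
      rw [play_fst, play_fst, ← ih, hA n (by omega)]
    have hsnd : (play σa σe n).2 = (play σa' σe' n).2 := by
      have := hE n (by omega)
      rw [pre_succ, List.map_append] at this
      rw [play_snd, play_snd, ← ih, ← hfst]
      simpa using this
    rw [pre_succ, pre_succ, ih, Prod.ext hfst hsnd]

def residualStrategy {α β : Type} (σ : List α → β) (p : List α) : List α → β := fun s => σ (p ++ s)

theorem pre_play_add (σa : List B → A) (σe : List A → B) (k j : ℕ) :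
    pre (play σa σe) (k + j) = pre (play σa σe) k ++
      pre (play (residualStrategy σa ((pre (play σa σe) k).map Prod.snd))
        (residualStrategy σe ((pre (play σa σe) k).map Prod.fst))) j := by
  induction j with
  | zero => simp
  | succ j ih =>
    set σa' := residualStrategy σa ((pre (play σa σe) k).map Prod.snd)
    set σe' := residualStrategy σe ((pre (play σa σe) k).map Prod.fst)
    have hfst : (play σa σe (k + j)).1 = (play σa' σe' j).1 := by
      rw [play_fst, play_fst, ih]; simp [σa', residualStrategy]
    have hsnd : (play σa σe (k + j)).2 = (play σa' σe' j).2 := by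
      rw [play_snd, play_snd, ih, hfst]; simp [σe', residualStrategy]
    rw [← add_assoc, pre_succ, ih, pre_succ, Prod.ext hfst hsnd, List.append_assoc]

end Play

section Safety

variable {A B Q : Type} (M : DFA (A × B) Q)

def KeepsSafeFrom (q : Q) (σe : List A → B) : Prop :=
  ∀ σa : List B → A, ∀ k, 1 ≤ k → M.evalFrom q (pre (play σa σe) k) ∈ M.accept

theorem envEnforces_safe_accepts_iff (σe : List A → B) :
    EnvEnforces σe (Safe {w | w ≠ [] ∧ w ∈ M.accepts}) ↔ KeepsSafeFrom M M.start σe := by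
  refine forall_congr' fun σa => forall₂_congr fun k hk => ?_
  have : pre (play σa σe) k ≠ [] := by
    rw [← List.length_pos_iff, length_pre]; omega
  simp [this, DFA.mem_accepts, DFA.eval]

theorem KeepsSafeFrom.residual {M} {q : Q} {σe : List A → B} (h : KeepsSafeFrom M q σe)
    (σa : List B → A) (k : ℕ) :
    KeepsSafeFrom M (M.evalFrom q (pre (play σa σe) k))
      (residualStrategy σe ((pre (play σa σe) k).map Prod.fst)) := by
  intro σa' j hj
  set σb : List B → A := fun s => if s.length < k then σa s else σa' (s.drop k)
  have hpre : pre (play σb σe) k = pre (play σa σe) k :=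
    (pre_play_congr (fun i hi => by simp [σb, hi]) (fun _ _ => rfl)).symm
  have hres : residualStrategy σb ((pre (play σa σe) k).map Prod.snd) = σa' := by
    funext s; simp [σb, residualStrategy]
  have := h σb (k + j) (by omega)
  rwa [pre_play_add, hpre, hres, DFA.evalFrom_of_append] at this

end Safety

section Deviation

variable {A B : Type} [DecidableEq A]

/-- Follow `σ` while the agent plays along `u`; once it deviates from `u` at round `d`
(or `u` runs out, `d = u.length`), play `τ d` on the rest of the game. -/
def switchOnDeviation (u : List A) (σ : List A → B) (τ : ℕ → List A → B) (l : List A) : B :=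
  if l.length ≤ l.commonPrefixLength u then σ l
  else τ (l.commonPrefixLength u) (l.drop (l.commonPrefixLength u))

variable (u : List A) (σ : List A → B) (τ : ℕ → List A → B)

theorem switchOnDeviation_take (j : ℕ) : switchOnDeviation u σ τ (u.take j) = σ (u.take j) := by
  have h := List.commonPrefixLength_append_append (u.take j) [] (u.drop j)
  rw [List.append_nil, List.take_append_drop] at h
  simp [switchOnDeviation, h]

theorem residualStrategy_switchOnDeviation {d : ℕ} (hd : d ≤ u.length) {a : A}
    (ha : (u.drop d).head? ≠ some a) (r : List A) :
    residualStrategy (switchOnDeviation u σ τ) (u.take d) (a :: r) = τ d (a :: r) := by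
  have hc : (u.take d ++ a :: r).commonPrefixLength u = d := by
    conv_lhs => rhs; rw [← List.take_append_drop d u]
    rw [List.commonPrefixLength_append_append, List.commonPrefixLength_cons_of_head?_ne _ ha,
      List.length_take, min_eq_left hd, add_zero]
  have hlen : (u.take d).length = d := by simp [hd]
  simp only [residualStrategy, switchOnDeviation, hc]
  rw [if_neg (by simp [hlen]), List.drop_left' hlen]

theorem pre_play_residualStrategy_switchOnDeviation (σa : List B → A) {d : ℕ} (hd : d ≤ u.length)
    (ha : (u.drop d).head? ≠ some (σa [])) (j : ℕ) :
    pre (play σa (residualStrategy (switchOnDeviation u σ τ) (u.take d))) j =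
      pre (play σa (τ d)) j :=
  pre_play_congr (fun _ _ => rfl) fun i _ => by
    rw [map_fst_pre_play_succ]; exact residualStrategy_switchOnDeviation u σ τ hd ha _

end Deviation

section Stitch

variable {A B Q : Type}

theorem exists_deviation (σa σb : List B → A) (σe σe' : List A → B) (m : ℕ)
    (hE : ∀ i < m, σe' ((pre (play σb σe) (i + 1)).map Prod.fst) =
      σe ((pre (play σb σe) (i + 1)).map Prod.fst)) :
    ∃ D ≤ m, pre (play σa σe') D = pre (play σb σe) D ∧
      (D < m → (play σa σe' D).1 ≠ (play σb σe D).1) := by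
  classical
  set D := (pre (play σa σe') m).commonPrefixLength (pre (play σb σe) m)
  have hDm : D ≤ m := by simpa using List.commonPrefixLength_le_length_left (pre (play σa σe') m) _
  have hpre : pre (play σa σe') D = pre (play σb σe) D := by
    rw [← take_pre _ hDm, ← take_pre (play σb σe) hDm, List.take_commonPrefixLength]
  refine ⟨D, hDm, hpre, fun hD hfst => ?_⟩
  apply List.getElem_commonPrefixLength_ne (pre (play σa σe') m) (pre (play σb σe) m)
    (by rw [length_pre]; exact hD) (by rw [length_pre]; exact hD)
  simp only [getElem_pre]
  refine Prod.ext hfst ?_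
  have := hE D hD
  rw [pre_succ, List.map_append] at this
  rw [play_snd, play_snd, hpre, hfst]
  simpa using this

variable [DecidableEq A] (M : DFA (A × B) Q) (q : Q) (σag : List B → A) (σenv : List A → B)
  (m : ℕ) (τ : ℕ → List A → B)

theorem switchOnDeviation_map_fst_pre_play {i : ℕ} (hi : i < m) :
    switchOnDeviation ((pre (play σag σenv) m).map Prod.fst) σenv τ
        ((pre (play σag σenv) (i + 1)).map Prod.fst) =
      σenv ((pre (play σag σenv) (i + 1)).map Prod.fst) := by
  rw [← take_pre _ (show i + 1 ≤ m by omega), List.map_take, switchOnDeviation_take]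

theorem pre_play_switchOnDeviation :
    pre (play σag (switchOnDeviation ((pre (play σag σenv) m).map Prod.fst) σenv τ)) m =
      pre (play σag σenv) m :=
  (pre_play_congr (fun _ _ => rfl) fun _ hi =>
    (switchOnDeviation_map_fst_pre_play σag σenv m τ hi).symm).symm

theorem keepsSafeFrom_switchOnDeviation
    (hτ : ∀ k ≤ m, KeepsSafeFrom M (M.evalFrom q (pre (play σag σenv) k)) (τ k))
    (hacc : ∀ k, 1 ≤ k → k ≤ m → M.evalFrom q (pre (play σag σenv) k) ∈ M.accept) :
    KeepsSafeFrom M q (switchOnDeviation ((pre (play σag σenv) m).map Prod.fst) σenv τ) := by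
  set u := (pre (play σag σenv) m).map Prod.fst
  intro σa k hk
  obtain ⟨D, hDm, hpre, hdev⟩ := exists_deviation σa σag σenv (switchOnDeviation u σenv τ) m
    fun _ => switchOnDeviation_map_fst_pre_play σag σenv m τ
  rcases le_or_gt k D with hkD | hDk
  · rw [← take_pre _ hkD, hpre, take_pre _ hkD]
    exact hacc k hk (hkD.trans hDm)
  obtain ⟨j, rfl⟩ := Nat.exists_eq_add_of_lt hDk
  have huD : (pre (play σag σenv) D).map Prod.fst = u.take D := by
    rw [← List.map_take, take_pre _ hDm]
  have hhead : (u.drop D).head? ≠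
      some (residualStrategy σa ((pre (play σag σenv) D).map Prod.snd) []) := by
    rw [residualStrategy, List.append_nil, ← hpre, ← play_fst σa _ D, List.head?_drop]
    rcases hDm.lt_or_eq with hD | rfl
    · simpa [u, hD] using (hdev hD).symm
    · simp [u]
  rw [add_assoc, pre_play_add, hpre, DFA.evalFrom_of_append, huD,
    pre_play_residualStrategy_switchOnDeviation u σenv τ _ (by simpa [u] using hDm) hhead]
  exact hτ D hDm _ _ (by omega)

end Stitch

theorem alg5_correctness_general {A B Q₂ : Type}
    (T₁ : Set (List (A × B))) (M₂ : DFA (A × B) Q₂)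
    (T₂ : Set (List (A × B))) (hT₂ : T₂ = {w | w ≠ [] ∧ w ∈ M₂.accepts}) :
    (∃ σag : List B → A, EnforcesUnder σag (Safe T₁) (Safe T₂)) ↔
      (∃ σag : List B → A, ∀ σenv : List A → B, ∀ m : ℕ, 1 ≤ m →
        pre (play σag σenv) m ∈ T₁ ∨
        ∃ k : ℕ, k ≤ m ∧
          (¬ EnvWinsSafeFrom M₂ (M₂.eval (pre (play σag σenv) k)) ∨
            (1 ≤ k ∧ M₂.eval (pre (play σag σenv) k) ∉ M₂.accept))) := by
  classical
  subst hT₂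
  constructor
  · rintro ⟨σag, hσag⟩
    refine ⟨σag, fun σenv m hm => ?_⟩
    by_contra! ⟨hT₁, hwin⟩
    have hτ : ∀ k, ∃ τ, k ≤ m → KeepsSafeFrom M₂ (M₂.eval (pre (play σag σenv) k)) τ := fun k =>
      if hk : k ≤ m then Exists.imp (fun _ h _ => h) (hwin k hk).1 else ⟨σenv, fun h => absurd h hk⟩
    choose τ hτ using hτ
    have hsafe := keepsSafeFrom_switchOnDeviation M₂ M₂.start σag σenv m τ hτ
      fun k hk hkm => (hwin k hkm).2 hk
    have := hσag _ ((envEnforces_safe_accepts_iff M₂ _).2 hsafe) m hm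
    rw [pre_play_switchOnDeviation] at this
    exact hT₁ this
  · rintro ⟨σag, hσag⟩
    refine ⟨σag, fun σenv henv m hm => ?_⟩
    rw [envEnforces_safe_accepts_iff] at henv
    rcases hσag σenv m hm with h | ⟨k, -, hk | ⟨hk, hacc⟩⟩
    · exact h
    · exact absurd ⟨_, henv.residual σag k⟩ hk
    · exact absurd (henv σag k hk) hacc

/-- Semantic correctness of Algorithm 5 (safety task under a safety
environment specification): the agent can enforce `Safe T₁` under `Safe T₂`
iff it has a strategy such that against every environment strategy, for every
time `m ≥ 1`, the prefix of the play is in `T₁`, or by time `m` the run of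
`M₂` has left the environment's safety winning region or left `M₂.accept`
(at a time `k ≥ 1`). -/
theorem alg5_correctness {A B Q₂ : Type}
    [Fintype A] [Fintype B] [Nonempty A] [Nonempty B] [Fintype Q₂]
    (T₁ : Set (List (A × B))) (M₂ : DFA (A × B) Q₂)
    (T₂ : Set (List (A × B))) (hT₂ : T₂ = {w | w ≠ [] ∧ w ∈ M₂.accepts}) :
    (∃ σag : List B → A, EnforcesUnder σag (Safe T₁) (Safe T₂)) ↔
      (∃ σag : List B → A, ∀ σenv : List A → B, ∀ m : ℕ, 1 ≤ m →
        pre (play σag σenv) m ∈ T₁ ∨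
        ∃ k : ℕ, k ≤ m ∧
          (¬ EnvWinsSafeFrom M₂ (M₂.eval (pre (play σag σenv) k)) ∨
            (1 ≤ k ∧ M₂.eval (pre (play σag σenv) k) ∉ M₂.accept))) :=
  alg5_correctness_general T₁ M₂ T₂ hT₂
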